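/- Let p ∈ OFS be not trim. Then f(p) = max(p). -/

import Mathlib

/-- `OFS p`: `p` is a strictly increasing nonempty finite sequence of positive integers. -/
def OFS (p : List ℕ) : Prop := p ≠ [] ∧ p.Pairwise (· < ·) ∧ ∀ x ∈ p, 0 < x

/-- The reduction operation `R`. -/
def R : List ℕ → List ℕ
  | [] => []
  | [a] => [a]
  | a :: b :: rest => (((b :: rest).map (fun x => x - a)).insert a).mergeSort (· ≤ ·)

/-- `max(p)` -/
def maxL (p : List ℕ) : ℕ := p.foldr max 0

/-- `gcd(p)` -/
def gcdL (p : List ℕ) : ℕ := p.foldr Nat.gcd 0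

/-- Fuel-based auxiliary for `f`; `maxL p + 1` fuel always suffices since
`maxL` strictly decreases under `R` for lists of length `> 1`. -/
def faux : ℕ → List ℕ → ℕ
  | _, [] => 0
  | _, [a] => a
  | 0, _ => 0
  | fuel+1, p => p.headI + faux fuel (R p)

/-- The function `f` of Castelli–Mignosi–Restivo: `f p = p₁` if `|p| = 1`,
and `f p = p₁ + f (R p)` otherwise. -/
def f (p : List ℕ) : ℕ := faux (maxL p + 1) p

/-- The function `fw` of Tijdeman–Zamboni. -/
def fw (p : List ℕ) : ℕ :=
  if h : 1 < p.length ∧ gcdL p.dropLast = gcdL p ∧ f p.dropLast ≤ maxL p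
  then fw p.dropLast
  else f p
termination_by p.length
decreasing_by
  simp only [List.length_dropLast]
  omega

/-- The Fine–Wilf graph `G(p,k)` on vertex set `{1,…,k}` (represented by `Fin k`,
with `v : Fin k` standing for the integer `v+1`); `i` and `j` are adjacent iff
`|i - j|` is an entry of `p`. -/
def G (p : List ℕ) (k : ℕ) : SimpleGraph (Fin k) where
  Adj i j := i ≠ j ∧ (((j : ℕ) - (i : ℕ)) ∈ p ∨ ((i : ℕ) - (j : ℕ)) ∈ p)
  symm := by
    constructor
    intro i j h
    exact ⟨h.1.symm, h.2.symm⟩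
  loopless := by
    constructor
    intro i h
    exact h.1 rfl

/-- `p` is trim. -/
def Trim (p : List ℕ) : Prop :=
  p.length = 1 ∨ (1 < p.length ∧
    (gcdL p ≠ gcdL p.dropLast ∨ (gcdL p = gcdL p.dropLast ∧ maxL p < f p.dropLast)))

open List

lemma maxL_cons (a : ℕ) (l : List ℕ) : maxL (a :: l) = max a (maxL l) := rfl

lemma le_maxL_of_mem {x : ℕ} {l : List ℕ} (h : x ∈ l) : x ≤ maxL l := by
  induction l with
  | nil => cases h
  | cons a t ih =>
    rcases List.mem_cons.1 h with rfl | h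
    · simp [maxL_cons]
    · have := ih h; simp [maxL_cons]; omega

lemma maxL_le {l : List ℕ} {c : ℕ} : maxL l ≤ c ↔ ∀ x ∈ l, x ≤ c := by
  induction l with
  | nil => simp [maxL]
  | cons a t ih => simp [maxL_cons, ih]

lemma gcdL_cons (a : ℕ) (l : List ℕ) : gcdL (a :: l) = Nat.gcd a (gcdL l) := rfl

lemma gcdL_dvd {x : ℕ} {l : List ℕ} (h : x ∈ l) : gcdL l ∣ x := by
  induction l with
  | nil => cases h
  | cons a t ih =>
    rcases List.mem_cons.1 h with rfl | h
    · exact Nat.gcd_dvd_left _ _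
    · exact (Nat.gcd_dvd_right a (gcdL t)).trans (ih h)

lemma dvd_gcdL {c : ℕ} {l : List ℕ} (h : ∀ x ∈ l, c ∣ x) : c ∣ gcdL l := by
  induction l with
  | nil => simp [gcdL]
  | cons a t ih =>
    rw [gcdL_cons]
    exact Nat.dvd_gcd (h a (by simp)) (ih fun x hx => h x (by simp [hx]))

lemma gcdL_perm {l₁ l₂ : List ℕ} (h : l₁ ~ l₂) : gcdL l₁ = gcdL l₂ :=
  Nat.dvd_antisymm (dvd_gcdL fun x hx => gcdL_dvd (h.symm.subset hx))
    (dvd_gcdL fun x hx => gcdL_dvd (h.subset hx))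

lemma gcdL_insert (a : ℕ) (l : List ℕ) : gcdL (l.insert a) = Nat.gcd a (gcdL l) := by
  by_cases h : a ∈ l
  · rw [List.insert_of_mem h, Nat.gcd_eq_right (gcdL_dvd h)]
  · rw [List.insert_of_not_mem h, gcdL_cons]

lemma gcd_sub (a x : ℕ) (h : a ≤ x) : Nat.gcd a (x - a) = Nat.gcd a x := by
  conv_rhs => rw [show x = (x - a) + a from by omega]
  rw [Nat.gcd_add_self_right]

lemma gcd_shift {a : ℕ} {q : List ℕ} (h : ∀ x ∈ q, a ≤ x) :
    Nat.gcd a (gcdL (q.map (fun y => y - a))) = Nat.gcd a (gcdL q) := by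
  induction q with
  | nil => rfl
  | cons x t ih =>
    have hx := h x (by simp)
    have ih' := ih fun y hy => h y (by simp [hy])
    simp only [List.map_cons, gcdL_cons]
    have lc : ∀ u v w : ℕ, Nat.gcd u (Nat.gcd v w) = Nat.gcd v (Nat.gcd u w) := fun u v w => by
      rw [← Nat.gcd_assoc, Nat.gcd_comm u v, Nat.gcd_assoc]
    rw [← Nat.gcd_assoc, gcd_sub a x hx, Nat.gcd_assoc, lc a x, ih', lc x a]

lemma maxL_lt {l : List ℕ} {c : ℕ} (hc : 0 < c) : maxL l < c ↔ ∀ x ∈ l, x < c := by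
  induction l with
  | nil => simp [maxL]; omega
  | cons a t ih => rw [maxL_cons, Nat.max_lt, ih]; simp
lemma R_cons (a b : ℕ) (rest : List ℕ) :
    R (a :: b :: rest) = (((b :: rest).map (fun x => x - a)).insert a).mergeSort (· ≤ ·) := rfl

lemma R_perm (a b : ℕ) (rest : List ℕ) :
    R (a :: b :: rest) ~ ((b :: rest).map (fun x => x - a)).insert a := by
  rw [R_cons]; exact mergeSort_perm _ _

lemma R_sorted (a b : ℕ) (rest : List ℕ) : (R (a :: b :: rest)).Pairwise (· ≤ ·) := by
  rw [R_cons]; exact pairwise_mergeSort' (r := fun x y : ℕ => x ≤ y) _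

lemma R_eq_of {a b : ℕ} {rest : List ℕ} {t : List ℕ}
    (hperm : ((b :: rest).map (fun x => x - a)).insert a ~ t)
    (hsort : t.Pairwise (· ≤ ·)) : R (a :: b :: rest) = t :=
  List.Perm.eq_of_pairwise' (R_sorted a b rest) hsort ((R_perm a b rest).trans hperm)

lemma mem_R {a b x : ℕ} {rest : List ℕ} :
    x ∈ R (a :: b :: rest) ↔ x = a ∨ ∃ y ∈ b :: rest, x = y - a := by
  rw [(R_perm a b rest).mem_iff, List.mem_insert_iff, List.mem_map]
  constructor
  · rintro (h | ⟨y, hy, rfl⟩)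
    · exact Or.inl h
    · exact Or.inr ⟨y, hy, rfl⟩
  · rintro (h | ⟨y, hy, rfl⟩)
    · exact Or.inl h
    · exact Or.inr ⟨y, hy, rfl⟩

lemma self_mem_R (a b : ℕ) (rest : List ℕ) : a ∈ R (a :: b :: rest) :=
  mem_R.2 (Or.inl rfl)

lemma OFS_R {a b : ℕ} {rest : List ℕ} (h : OFS (a :: b :: rest)) : OFS (R (a :: b :: rest)) := by
  obtain ⟨-, hsort, hpos⟩ := h
  rw [List.pairwise_cons] at hsort
  obtain ⟨halt, hsort⟩ := hsort
  have hd : ((b :: rest).map (fun x => x - a)).Pairwise (· < ·) := by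
    rw [List.pairwise_map]
    exact hsort.imp_of_mem (fun hx _ hlt => by
      have := halt _ hx; omega)
  have hnd0 : ((b :: rest).map (fun x => x - a)).Nodup :=
    hd.imp fun hlt => Nat.ne_of_lt hlt
  have hnd : (((b :: rest).map (fun x => x - a)).insert a).Nodup := List.Nodup.insert hnd0
  refine ⟨?_, ?_, ?_⟩
  · exact List.ne_nil_of_mem (self_mem_R a b rest)
  · have hnd' : (R (a :: b :: rest)).Nodup := ((R_perm a b rest).nodup_iff).2 hnd
    exact ((R_sorted a b rest).and hnd').imp fun ⟨hle, hne⟩ => lt_of_le_of_ne hle hne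
  · intro x hx
    rcases mem_R.1 hx with rfl | ⟨y, hy, rfl⟩
    · exact hpos _ (by simp)
    · have := halt _ hy; omega

lemma maxL_pos {a b : ℕ} {rest : List ℕ} (h : OFS (a :: b :: rest)) : 0 < maxL (a :: b :: rest) := by
  have := h.2.2 a (by simp)
  have := le_maxL_of_mem (show a ∈ a :: b :: rest by simp)
  omega

lemma maxL_R_lt {a b : ℕ} {rest : List ℕ} (h : OFS (a :: b :: rest)) :
    maxL (R (a :: b :: rest)) < maxL (a :: b :: rest) := by
  obtain ⟨-, hsort, hpos⟩ := h
  rw [List.pairwise_cons] at hsort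
  have hb : b ≤ maxL (a :: b :: rest) := le_maxL_of_mem (by simp)
  have hab : a < b := hsort.1 b (by simp)
  have ha : 0 < a := hpos a (by simp)
  have : ∀ x ∈ R (a :: b :: rest), x < maxL (a :: b :: rest) := by
    intro x hx
    rcases mem_R.1 hx with rfl | ⟨y, hy, rfl⟩
    · omega
    · have := le_maxL_of_mem (show y ∈ a :: b :: rest by simp [hy])
      omega
  exact (maxL_lt (maxL_pos ⟨List.cons_ne_nil _ _, by rw [List.pairwise_cons]; exact hsort, hpos⟩)).2 this
lemma faux_nil (fuel : ℕ) : faux fuel [] = 0 := by cases fuel <;> rfl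

lemma faux_singleton (fuel a : ℕ) : faux fuel [a] = a := by cases fuel <;> rfl

lemma faux_cons (fuel a b : ℕ) (rest : List ℕ) :
    faux (fuel + 1) (a :: b :: rest) = a + faux fuel (R (a :: b :: rest)) := rfl

lemma gcdL_R {a b : ℕ} {rest : List ℕ} (h : OFS (a :: b :: rest)) :
    gcdL (R (a :: b :: rest)) = gcdL (a :: b :: rest) := by
  have halt : ∀ x ∈ b :: rest, a ≤ x := by
    have := h.2.1
    rw [List.pairwise_cons] at this
    exact fun x hx => le_of_lt (this.1 x hx)
  rw [gcdL_perm (R_perm a b rest), gcdL_insert, gcd_shift halt]; rfl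

lemma faux_stable : ∀ m : ℕ, ∀ p : List ℕ, OFS p → maxL p = m →
    ∀ fuel₁ fuel₂ : ℕ, m < fuel₁ → m < fuel₂ → faux fuel₁ p = faux fuel₂ p := by
  intro m
  induction m using Nat.strong_induction_on with
  | _ m ih =>
    rintro p hp rfl fuel₁ fuel₂ h₁ h₂
    match p with
    | [] => exact absurd rfl hp.1
    | [a] => rw [faux_singleton, faux_singleton]
    | a :: b :: rest =>
      have hRm := maxL_R_lt hp
      have hpos := maxL_pos hp
      obtain ⟨k₁, rfl⟩ : ∃ k, fuel₁ = k + 1 := ⟨fuel₁ - 1, by omega⟩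
      obtain ⟨k₂, rfl⟩ : ∃ k, fuel₂ = k + 1 := ⟨fuel₂ - 1, by omega⟩
      rw [faux_cons, faux_cons,
        ih (maxL (R (a :: b :: rest))) hRm (R (a :: b :: rest)) (OFS_R hp) rfl k₁ k₂
          (by omega) (by omega)]

lemma f_singleton (a : ℕ) : f [a] = a := faux_singleton _ _

lemma f_cons {a b : ℕ} {rest : List ℕ} (h : OFS (a :: b :: rest)) :
    f (a :: b :: rest) = a + f (R (a :: b :: rest)) := by
  have hRm := maxL_R_lt h
  rw [f, faux_cons, f,
    faux_stable (maxL (R (a :: b :: rest))) _ (OFS_R h) rfl (maxL (a :: b :: rest))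
      (maxL (R (a :: b :: rest)) + 1) (by omega) (by omega)]

lemma f_ge_max : ∀ m : ℕ, ∀ p : List ℕ, OFS p → maxL p = m → maxL p ≤ f p := by
  intro m
  induction m using Nat.strong_induction_on with
  | _ m ih =>
    rintro p hp rfl
    match p with
    | [] => exact absurd rfl hp.1
    | [a] => simp [f_singleton, maxL]
    | a :: b :: rest =>
      have hRm := maxL_R_lt hp
      have hR := OFS_R hp
      have h1 := ih _ hRm _ hR rfl
      rw [f_cons hp]
      -- maxL p - a is attained: maxL p ∈ b :: rest
      have hmax_mem : ∃ y ∈ b :: rest, maxL (a :: b :: rest) = y := by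
        have hs := hp.2.1; rw [List.pairwise_cons] at hs
        have hb : b ≤ maxL (a :: b :: rest) := le_maxL_of_mem (by simp)
        have hab : a < b := hs.1 b (by simp)
        -- maxL of a::b::rest is max of members
        have : maxL (a :: b :: rest) ∈ a :: b :: rest := by
          have : ∀ l : List ℕ, l ≠ [] → maxL l ∈ l := by
            intro l
            induction l with
            | nil => simp
            | cons x t iht =>
              intro _
              rcases List.eq_nil_or_concat t with rfl | _
              · simp [maxL]
              · rcases le_or_gt (maxL t) x with hle | hlt
                · simp [maxL_cons, Nat.max_eq_left hle]
                · rw [maxL_cons, Nat.max_eq_right (le_of_lt hlt)]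
                  exact List.mem_cons_of_mem x (iht (by rintro rfl; simp [maxL] at hlt))
          exact this _ (by simp)
        rcases List.mem_cons.1 this with hq | hq
        · omega
        · exact ⟨maxL (a :: b :: rest), hq, rfl⟩
      obtain ⟨y, hy, hyeq⟩ := hmax_mem
      have : y - a ∈ R (a :: b :: rest) := mem_R.2 (Or.inr ⟨y, hy, rfl⟩)
      have h2 : y - a ≤ maxL (R (a :: b :: rest)) := le_maxL_of_mem this
      have ha : 0 < a := hp.2.2 a (by simp)
      omega
lemma main_lemma : ∀ m : ℕ, ∀ p : List ℕ, OFS p → maxL p = m → 1 < p.length →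
    gcdL p.dropLast = gcdL p → f p.dropLast ≤ maxL p → f p = maxL p := by
  intro m
  induction m using Nat.strong_induction_on with
  | _ m ih =>
    rintro p hp rfl hlen hgcd hf
    match p with
    | [] => simp at hlen
    | [a] => simp at hlen
    | a :: b :: rest =>
      have ha : 0 < a := hp.2.2 a (by simp)
      have hsp := hp.2.1
      rw [List.pairwise_cons] at hsp
      obtain ⟨halt, hq_sorted⟩ := hsp
      have hab : a < b := halt b (by simp)
      rcases List.eq_nil_or_concat rest with rfl | ⟨s', mx, rfl⟩
      · -- Case A : p = [a, b]
        have hmax : maxL [a, b] = b := by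
          show max a (max b 0) = b
          rw [Nat.max_zero, Nat.max_eq_right (le_of_lt hab)]
        have h1 : Nat.gcd a 0 = Nat.gcd a (Nat.gcd b 0) := hgcd
        rw [Nat.gcd_zero_right, Nat.gcd_zero_right] at h1
        have hdvd : a ∣ b := h1 ▸ Nat.gcd_dvd_right a b
        have h2a : 2 * a ≤ b := by
          obtain ⟨k, rfl⟩ := hdvd
          rcases k with _ | _ | k
          · omega
          · omega
          · calc 2 * a = a * 2 := by ring
              _ ≤ a * (k + 2) := Nat.mul_le_mul_left a (by omega)
        rcases eq_or_lt_of_le h2a with h2e | h2l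
        · -- b = 2a
          have hR : R [a, b] = [a] := by
            apply R_eq_of (t := [a]) _ (by simp)
            rw [List.map_singleton, show b - a = a from by omega,
              List.insert_of_mem (by simp)]
          rw [f_cons hp, hR, f_singleton, hmax]; omega
        · -- b > 2a
          have hR : R [a, b] = [a, b - a] := by
            apply R_eq_of (t := [a, b - a]) _ (by simp; omega)
            rw [List.map_singleton, List.insert_of_not_mem (by simp; omega)]
          have hofs : OFS [a, b - a] := by
            refine ⟨by simp, by simp; omega, by simp; omega⟩
          have hmax' : maxL [a, b - a] = b - a := by
            show max a (max (b - a) 0) = b - a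
            rw [Nat.max_zero, Nat.max_eq_right (by omega)]
          have hgcd' : gcdL ([a, b - a].dropLast) = gcdL [a, b - a] := by
            show Nat.gcd a 0 = Nat.gcd a (Nat.gcd (b - a) 0)
            rw [Nat.gcd_zero_right, Nat.gcd_zero_right]
            exact (Nat.gcd_eq_left (Nat.dvd_sub hdvd (dvd_refl a))).symm
          have hfd : f ([a, b - a].dropLast) ≤ maxL [a, b - a] := by
            show f [a] ≤ _
            rw [f_singleton, hmax']; omega
          have := ih (b - a) (by omega) [a, b - a] hofs hmax' (by simp) hgcd' hfd
          rw [f_cons hp, hR, this, hmax', hmax]; omega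
      · -- Case B : p = a :: b :: s' ++ [mx]
        simp only [List.concat_eq_append] at hp ih hlen hgcd hf halt hq_sorted ⊢
        have hsplit : a :: b :: (s' ++ [mx]) = (a :: b :: s') ++ [mx] := by simp
        have hdrop : (a :: b :: (s' ++ [mx])).dropLast = a :: b :: s' := by
          rw [hsplit, List.dropLast_concat]
        have hqpw : List.Pairwise (· < ·) ((b :: s') ++ [mx]) := hq_sorted
        rw [List.pairwise_append] at hqpw
        obtain ⟨hpw1, -, hlt_mx⟩ := hqpw
        have hltmx : ∀ x ∈ b :: s', x < mx := fun x hx => hlt_mx x hx mx (by simp)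
        have hamx : a < mx := halt mx (by simp)
        have hmax : maxL (a :: b :: (s' ++ [mx])) = mx := by
          apply Nat.le_antisymm
          · apply maxL_le.2
            intro x hx
            rcases List.mem_cons.1 hx with rfl | hx
            · omega
            · rw [show b :: (s' ++ [mx]) = (b :: s') ++ [mx] from by simp] at hx
              rcases List.mem_append.1 hx with hx | hx
              · exact le_of_lt (hltmx x hx)
              · simp at hx; omega
          · exact le_maxL_of_mem (by simp)
        -- OFS of the prefix p' = a :: b :: s'
        have hp' : OFS (a :: b :: s') := by
          refine ⟨by simp, ?_, ?_⟩
          · rw [List.pairwise_cons]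
            exact ⟨fun x hx => halt x (by rcases List.mem_cons.1 hx with rfl | hx <;> simp [hx]),
              hpw1⟩
          · intro x hx
            apply hp.2.2
            rcases List.mem_cons.1 hx with rfl | hx
            · simp
            · rcases List.mem_cons.1 hx with rfl | hx <;> simp [hx]
        have hOR' : OFS (R (a :: b :: s')) := OFS_R hp'
        have hfge : maxL (R (a :: b :: s')) ≤ f (R (a :: b :: s')) :=
          f_ge_max _ _ hOR' rfl
        have haR : a ≤ maxL (R (a :: b :: s')) := le_maxL_of_mem (self_mem_R a b s')
        have hfp' : f (a :: b :: s') = a + f (R (a :: b :: s')) := f_cons hp'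
        rw [hdrop] at hgcd hf
        rw [hmax] at hf
        have h2a : 2 * a ≤ mx := by omega
        -- map of q decomposes
        have dmap : ((b :: (s' ++ [mx])).map (fun x => x - a))
            = ((b :: s').map (fun x => x - a)) ++ [mx - a] := by simp
        rcases eq_or_lt_of_le h2a with h2e | h2l
        · -- mx = 2a : R p = R p'
          have hnotmem : a ∉ (b :: s').map (fun x => x - a) := by
            rw [List.mem_map]
            rintro ⟨y, hy, hyeq⟩
            have := hltmx y hy
            have := halt y (by rcases List.mem_cons.1 hy with rfl | hy <;> simp [hy])
            omega
          have hmem : a ∈ (b :: (s' ++ [mx])).map (fun x => x - a) := by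
            rw [dmap]
            exact List.mem_append.2 (Or.inr (by simp; omega))
          have hRR : R (a :: b :: (s' ++ [mx])) = R (a :: b :: s') := by
            apply R_eq_of _ (R_sorted a b s')
            rw [List.insert_of_mem hmem, dmap, show mx - a = a from by omega]
            calc ((b :: s').map (fun x => x - a)) ++ [a]
                ~ a :: (b :: s').map (fun x => x - a) := (List.perm_append_singleton _ _)
              _ = ((b :: s').map (fun x => x - a)).insert a :=
                  (List.insert_of_not_mem hnotmem).symm
              _ ~ R (a :: b :: s') := (R_perm a b s').symm
          rw [f_cons hp, hRR, hmax]
          omega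
        · -- mx > 2a : R p = R p' ++ [mx - a]
          have hins : ((b :: (s' ++ [mx])).map (fun x => x - a)).insert a
              = ((b :: s').map (fun x => x - a)).insert a ++ [mx - a] := by
            by_cases hmem : a ∈ (b :: s').map (fun x => x - a)
            · rw [List.insert_of_mem hmem,
                List.insert_of_mem (by rw [dmap]; exact List.mem_append.2 (Or.inl hmem)), dmap]
            · rw [List.insert_of_not_mem hmem, dmap, List.insert_of_not_mem]
              · rfl
              · rw [List.mem_append]
                rintro (h | h)
                · exact hmem h
                · simp at h; omega
          have hmemR' : ∀ x ∈ R (a :: b :: s'), x ≤ mx - a := by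
            intro x hx
            rcases mem_R.1 hx with rfl | ⟨y, hy, rfl⟩
            · omega
            · have := hltmx y hy
              omega
          have hRR : R (a :: b :: (s' ++ [mx])) = R (a :: b :: s') ++ [mx - a] := by
            apply R_eq_of _ ?_
            · rw [hins]
              exact (R_perm a b s').symm.append_right [mx - a]
            · rw [List.pairwise_append]
              exact ⟨R_sorted a b s', by simp, fun x hx y hy => by
                simp at hy; subst hy; exact hmemR' x hx⟩
          have hRne : R (a :: b :: s') ≠ [] := List.ne_nil_of_mem (self_mem_R a b s')
          have hmaxR : maxL (R (a :: b :: (s' ++ [mx]))) = mx - a := by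
            apply Nat.le_antisymm
            · apply maxL_le.2
              intro x hx
              rw [hRR, List.mem_append] at hx
              rcases hx with hx | hx
              · exact hmemR' x hx
              · simp at hx; omega
            · exact le_maxL_of_mem (by rw [hRR]; exact List.mem_append.2 (Or.inr (by simp)))
          have hdropR : (R (a :: b :: (s' ++ [mx]))).dropLast = R (a :: b :: s') := by
            rw [hRR, List.dropLast_concat]
          have hlenR : 1 < (R (a :: b :: (s' ++ [mx]))).length := by
            rw [hRR, List.length_append]
            have := List.length_pos_iff.2 hRne
            simp; omega
          have hgcdR : gcdL ((R (a :: b :: (s' ++ [mx]))).dropLast)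
              = gcdL (R (a :: b :: (s' ++ [mx]))) := by
            rw [hdropR, gcdL_R hp', gcdL_R hp]
            exact hgcd
          have hfR : f ((R (a :: b :: (s' ++ [mx]))).dropLast)
              ≤ maxL (R (a :: b :: (s' ++ [mx]))) := by
            rw [hdropR, hmaxR]
            omega
          have hout := ih (mx - a) (by omega) _ (OFS_R hp) hmaxR hlenR hgcdR hfR
          rw [f_cons hp, hout, hmaxR, hmax]
          omega

theorem not_trim_f_eq_max (p : List ℕ) (hp : OFS p) (h : ¬ Trim p) :
    f p = maxL p := by
  have hlen : 0 < p.length := List.length_pos_iff.2 hp.1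
  rw [Trim] at h
  push_neg at h
  obtain ⟨h1, h2⟩ := h
  have hlen2 : 1 < p.length := by omega
  obtain ⟨hg, hfle⟩ := h2 hlen2
  exact main_lemma (maxL p) p hp rfl hlen2 hg.symm (hfle hg)
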